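/- The bivariate generating functions B(z,x) = Σ_{n,i} b_{n,i} zⁿ xⁱ and R(z,x) = Σ_{n,i} r_{n,i} zⁿ xⁱ, where b_{n,i} (resp. r_{n,i}) is the number of B-colorings (resp. R-colorings) of size n of lambda skeletons of degree i, satisfy the identity B(z,x) = x + B(z,x)·R(z,x) as formal power series in the two variables z and x. -/

import Mathlib

/-- Lambda skeletons `Λ̃(i)`, graded by degree. -/
inductive Skel : ℕ → Type
  | leaf : Skel 1
  | app : {j k : ℕ} → Skel j → Skel k → Skel (j + k)
  | lam : {i : ℕ} → Skel (i + 1) → Skel i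

/-- The two colors: `B` ("blue", neutral) and `R` ("red", normal). -/
inductive Color : Type
  | B : Color
  | R : Color
  deriving DecidableEq

/-- `Col c i p`: colorings (derivations of neutrality for `c = B`,
respectively normality for `c = R`) of the skeleton `p` of degree `i`,
by the rules (v), (a), (s), (ℓ). -/
inductive Col : Color → (i : ℕ) → Skel i → Type
  | v : Col Color.B 1 Skel.leaf
  | a {j k : ℕ} {p : Skel j} {q : Skel k} :
      Col Color.B j p → Col Color.R k q → Col Color.B (j + k) (Skel.app p q)
  | s {i : ℕ} {p : Skel i} : Col Color.B i p → Col Color.R i p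
  | l {i : ℕ} {p : Skel (i + 1)} : Col Color.R (i + 1) p → Col Color.R i (Skel.lam p)

/-- The size of a coloring: the number of uses of the s-rule in it. -/
def Col.size : {c : Color} → {i : ℕ} → {p : Skel i} → Col c i p → ℕ
  | _, _, _, Col.v => 0
  | _, _, _, Col.a d e => d.size + e.size
  | _, _, _, Col.s d => d.size + 1
  | _, _, _, Col.l d => d.size

/-- The number of colorings of color `c` and size `n` of lambda skeletons
of degree `i`. -/
noncomputable def colCount (c : Color) (n i : ℕ) : ℕ :=
  Nat.card { pp : (p : Skel i) × Col c i p // Col.size pp.2 = n }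

/-- The bivariate generating function `B(z,x)` counting B-colorings by size
(exponent of `z`, variable `0`) and degree (exponent of `x`, variable `1`). -/
noncomputable def Bgf : MvPowerSeries (Fin 2) ℚ :=
  fun d => (colCount Color.B (d 0) (d 1) : ℚ)

/-- The bivariate generating function `R(z,x)` counting R-colorings by size
(exponent of `z`, variable `0`) and degree (exponent of `x`, variable `1`). -/
noncomputable def Rgf : MvPowerSeries (Fin 2) ℚ :=
  fun d => (colCount Color.R (d 0) (d 1) : ℚ)

/-!
Every B-coloring is either the leaf `∗` or an application `p(q)` of a B-coloring to an
R-coloring, and size and degree add up along this decomposition. So the B-colorings are, as a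
set weighted by `(size, degree)`, isomorphic to `{∗} ⊕ B × R`, and the counting series turns
`⊕` into `+` and `×` into `·`.

Since `Nat.card` of an infinite type is `0`, this needs every level (fixed size and degree) to
be finite. That follows by induction on the size, with an inner downward induction on the degree
for R-colorings: an R-coloring is `s(d)` or `λ∗.r` with `r` of one degree higher, and the degree
of an R-coloring is at most its size.
-/

open Finset

section CountingSeries

variable {σ α β : Type*} (R : Type*) [Semiring R]

noncomputable def countingSeries (w : α → σ →₀ ℕ) : MvPowerSeries σ R :=
  fun d => (Nat.card {a // w a = d} : R)

variable {R}

theorem coeff_countingSeries (w : α → σ →₀ ℕ) (d : σ →₀ ℕ) :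
    MvPowerSeries.coeff d (countingSeries R w) = Nat.card {a // w a = d} := rfl

theorem countingSeries_congr {w : α → σ →₀ ℕ} {w' : β → σ →₀ ℕ} (e : α ≃ β)
    (he : ∀ a, w' (e a) = w a) : countingSeries R w' = countingSeries R w :=
  MvPowerSeries.ext fun d => by
    simp only [coeff_countingSeries]
    rw [Nat.card_congr (e.subtypeEquiv (p := (w · = d)) (q := (w' · = d)) fun a => by rw [he])]

theorem countingSeries_const [DecidableEq σ] (d₀ : σ →₀ ℕ) :
    countingSeries R (fun _ : Unit => d₀) = MvPowerSeries.monomial d₀ 1 :=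
  MvPowerSeries.ext fun d => by
    rw [coeff_countingSeries, MvPowerSeries.coeff_monomial]
    by_cases h : d₀ = d <;> simp [h, eq_comm]

theorem countingSeries_sumElim {w : α → σ →₀ ℕ} {w' : β → σ →₀ ℕ}
    (hw : ∀ d, Finite {a // w a = d}) (hw' : ∀ d, Finite {b // w' b = d}) :
    countingSeries R (Sum.elim w w') = countingSeries R w + countingSeries R w' :=
  MvPowerSeries.ext fun d => by
    have := hw d
    have := hw' d
    simp only [map_add, coeff_countingSeries]
    rw [Nat.card_congr Equiv.subtypeSum]
    change (Nat.card ({a // w a = d} ⊕ {b // w' b = d}) : R) = _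
    rw [Nat.card_sum, Nat.cast_add]

def fiberAddEquiv [DecidableEq σ] (w : α → σ →₀ ℕ) (w' : β → σ →₀ ℕ) (d : σ →₀ ℕ) :
    {x : α × β // w x.1 + w' x.2 = d} ≃
      (uv : antidiagonal d) × ({a // w a = uv.1.1} × {b // w' b = uv.1.2}) where
  toFun x := ⟨⟨(w x.1.1, w' x.1.2), mem_antidiagonal.2 x.2⟩, ⟨x.1.1, rfl⟩, ⟨x.1.2, rfl⟩⟩
  invFun y := ⟨(y.2.1, y.2.2), by rw [y.2.1.2, y.2.2.2]; exact mem_antidiagonal.1 y.1.2⟩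
  left_inv _ := rfl
  right_inv := by
    rintro ⟨⟨⟨u, v⟩, huv⟩, ⟨a, ha⟩, ⟨b, hb⟩⟩
    dsimp only at ha hb
    subst ha hb
    rfl

theorem finite_fiber_add {w : α → σ →₀ ℕ} {w' : β → σ →₀ ℕ}
    (hw : ∀ d, Finite {a // w a = d}) (hw' : ∀ d, Finite {b // w' b = d}) (d : σ →₀ ℕ) :
    Finite {x : α × β // w x.1 + w' x.2 = d} := by
  classical
  exact Finite.of_equiv _ (fiberAddEquiv w w' d).symm

theorem countingSeries_prod {w : α → σ →₀ ℕ} {w' : β → σ →₀ ℕ}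
    (hw : ∀ d, Finite {a // w a = d}) (hw' : ∀ d, Finite {b // w' b = d}) :
    countingSeries R (fun x : α × β => w x.1 + w' x.2) =
      countingSeries R w * countingSeries R w' := by
  classical
  refine MvPowerSeries.ext fun d => ?_
  rw [MvPowerSeries.coeff_mul, coeff_countingSeries, Nat.card_congr (fiberAddEquiv w w' d),
    Nat.card_sigma, ← Finset.sum_coe_sort (antidiagonal d)]
  push_cast [Nat.card_prod]
  rfl

end CountingSeries

theorem Col.size_pos : ∀ {i : ℕ} {p : Skel i} (d : Col .R i p), 0 < d.size
  | _, _, .s _ => Nat.succ_pos _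
  | _, _, .l r => Col.size_pos r

mutual

theorem Col.deg_le_size_add_one : ∀ {i : ℕ} {p : Skel i} (d : Col .B i p), i ≤ d.size + 1
  | _, _, .v => le_rfl
  | _, _, .a d e => by
    have := d.deg_le_size_add_one
    have := e.deg_le_size
    simp only [Col.size]
    omega

theorem Col.deg_le_size : ∀ {i : ℕ} {p : Skel i} (d : Col .R i p), i ≤ d.size
  | _, _, .s d => d.deg_le_size_add_one
  | _, _, .l r => Nat.le_of_succ_le r.deg_le_size

end

abbrev Coloring (c : Color) : Type := (i : ℕ) × (p : Skel i) × Col c i p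

namespace Coloring

variable {c : Color}

def deg (x : Coloring c) : ℕ := x.1

def size (x : Coloring c) : ℕ := x.2.2.size

noncomputable def weight (x : Coloring c) : Fin 2 →₀ ℕ :=
  Finsupp.single 0 x.size + Finsupp.single 1 x.deg

def level (c : Color) (n i : ℕ) : Set (Coloring c) := {x | x.deg = i ∧ x.size = n}

theorem weight_eq_iff {x : Coloring c} {d : Fin 2 →₀ ℕ} :
    x.weight = d ↔ x ∈ level c (d 0) (d 1) := by
  simp [weight, level, Finsupp.ext_iff, Fin.forall_fin_two, eq_comm, and_comm]

def levelEquiv (c : Color) (n i : ℕ) :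
    level c n i ≃ {pp : (p : Skel i) × Col c i p // pp.2.size = n} :=
  (Equiv.subtypeSubtypeEquivSubtypeInter _ _).symm.trans
    (Equiv.subtypeEquiv (Equiv.sigmaSubtype i) fun ⟨_, h⟩ => by subst h; rfl)

theorem natCard_weight_eq (c : Color) (d : Fin 2 →₀ ℕ) :
    Nat.card {x : Coloring c // x.weight = d} = colCount c (d 0) (d 1) := by
  rw [colCount, ← Nat.card_congr (levelEquiv c (d 0) (d 1))]
  exact Nat.card_congr (Equiv.subtypeEquivRight fun _ => weight_eq_iff)

def decomposeB : Coloring .B ≃ Unit ⊕ Coloring .B × Coloring .R where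
  toFun
    | ⟨_, _, .v⟩ => .inl ()
    | ⟨_, _, .a d e⟩ => .inr (⟨_, _, d⟩, ⟨_, _, e⟩)
  invFun
    | .inl _ => ⟨1, .leaf, .v⟩
    | .inr (⟨_, _, d⟩, ⟨_, _, e⟩) => ⟨_, _, .a d e⟩
  left_inv := by rintro ⟨_, _, d⟩; cases d <;> rfl
  right_inv := by rintro (_ | ⟨⟨_, _, _⟩, ⟨_, _, _⟩⟩) <;> rfl

theorem weight_decomposeB (x : Coloring .B) :
    Sum.elim (fun _ => Finsupp.single 1 1) (fun yz => yz.1.weight + yz.2.weight) (decomposeB x) =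
      x.weight := by
  obtain ⟨_, _, _ | ⟨d, e⟩⟩ := x
  · simp [decomposeB, weight, size, deg, Col.size]
  · simp only [decomposeB, Equiv.coe_fn_mk, Sum.elim_inr, weight, size, deg, Col.size,
      Finsupp.single_add]
    abel

def decomposeR : Coloring .R → Coloring .B ⊕ Coloring .R
  | ⟨_, _, .s d⟩ => .inl ⟨_, _, d⟩
  | ⟨_, _, .l r⟩ => .inr ⟨_, _, r⟩

theorem decomposeR_injective : Function.Injective decomposeR := by
  rintro ⟨_, _, _ | _⟩ ⟨_, _, _ | _⟩ h <;> cases h <;> rfl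

theorem level_R_eq_empty {n i : ℕ} (h : n < i) : level .R n i = ∅ :=
  Set.eq_empty_of_forall_notMem fun ⟨_, _, r⟩ ⟨hdeg, hsize⟩ => by
    have := r.deg_le_size
    simp only [deg, size] at hdeg hsize
    omega

theorem level_B_subset (n i : ℕ) :
    level .B n i ⊆ decomposeB ⁻¹' (Set.range Sum.inl ∪ Sum.inr ''
      ⋃ m ∈ Set.Iio n, ⋃ j ∈ Set.Iic i, level .B m j ×ˢ level .R (n - m) (i - j)) := by
  rintro ⟨_, _, x⟩ ⟨hdeg, hsize⟩
  cases x with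
  | v => exact Or.inl ⟨(), rfl⟩
  | @a j k _ _ d e =>
    have := e.size_pos
    simp only [deg, size, Col.size] at hdeg hsize
    refine Or.inr ⟨(⟨_, _, d⟩, ⟨_, _, e⟩), ?_, rfl⟩
    simp only [Set.mem_iUnion, Set.mem_prod, level, deg, size]
    exact ⟨d.size, by simp; omega, j, by simp; omega, ⟨rfl, rfl⟩,
      by dsimp only; omega, by dsimp only; omega⟩

theorem level_R_subset (n i : ℕ) :
    level .R n i ⊆ decomposeR ⁻¹'
      (Sum.inl '' (⋃ m ∈ Set.Iio n, level .B m i) ∪ Sum.inr '' level .R n (i + 1)) := by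
  rintro ⟨_, _, x⟩ ⟨hdeg, hsize⟩
  simp only [deg, size] at hdeg hsize
  subst hdeg
  cases x with
  | s d =>
    refine Or.inl ⟨⟨_, _, d⟩, ?_, rfl⟩
    simp only [Set.mem_iUnion, level, deg, size]
    exact ⟨d.size, by simp [← hsize, Col.size], rfl, rfl⟩
  | l r => exact Or.inr ⟨⟨_, _, r⟩, ⟨rfl, hsize⟩, rfl⟩

theorem finite_level (n : ℕ) : ∀ c i, (level c n i).Finite := by
  induction n using Nat.strong_induction_on with
  | _ n ih =>
  have hR : ∀ k i, n < i + k → (level .R n i).Finite := by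
    intro k
    induction k with
    | zero => intro i h; rw [level_R_eq_empty (by omega)]; exact Set.finite_empty
    | succ k ihk =>
      intro i h
      refine (Set.Finite.preimage decomposeR_injective.injOn ?_).subset (level_R_subset n i)
      exact (((Set.finite_Iio n).biUnion fun m hm => ih m hm .B i).image _).union
        ((ihk (i + 1) (by omega)).image _)
  intro c i
  cases c with
  | B =>
    refine (Set.Finite.preimage decomposeB.injective.injOn ?_).subset (level_B_subset n i)
    refine (Set.finite_range _).union (((Set.finite_Iio n).biUnion fun m hm =>
      (Set.finite_Iic i).biUnion fun j _ => (ih m hm .B j).prod ?_).image _)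
    rcases m.eq_zero_or_pos with rfl | hm0
    · exact hR (n + 1) _ (by omega)
    · exact ih _ (by have := Set.mem_Iio.1 hm; omega) .R _
  | R => exact hR (n + 1) i (by omega)

theorem finite_weight_eq (c : Color) (d : Fin 2 →₀ ℕ) :
    Finite {x : Coloring c // x.weight = d} :=
  ((finite_level (d 0) c (d 1)).subset fun _ => weight_eq_iff.1).to_subtype

end Coloring

theorem countingSeries_weight_eq_Bgf : countingSeries ℚ (Coloring.weight (c := .B)) = Bgf :=
  MvPowerSeries.ext fun d => by rw [coeff_countingSeries, Coloring.natCard_weight_eq]; rfl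

theorem countingSeries_weight_eq_Rgf : countingSeries ℚ (Coloring.weight (c := .R)) = Rgf :=
  MvPowerSeries.ext fun d => by rw [coeff_countingSeries, Coloring.natCard_weight_eq]; rfl

/-- Equation (1): `B(z,x) = x + B(z,x)·R(z,x)` as formal power series. -/
theorem Bgf_functional_equation :
    Bgf = MvPowerSeries.X 1 + Bgf * Rgf := by
  classical
  have hB := Coloring.finite_weight_eq .B
  have hR := Coloring.finite_weight_eq .R
  rw [← countingSeries_weight_eq_Bgf, ← countingSeries_weight_eq_Rgf, MvPowerSeries.X_def,
    ← countingSeries_const, ← countingSeries_prod hB hR,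
    ← countingSeries_sumElim (fun _ => inferInstance) (finite_fiber_add hB hR)]
  exact (countingSeries_congr Coloring.decomposeB Coloring.weight_decomposeB).symm
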